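/- arXiv:2602.24243 — 5 statements merged into one kernel-verified Lean document; each statement's English description precedes it below -/
import Mathlib

section
/- Let X and X̂ be Bool-valued random variables on a probability space with P(X = true) = p for some 0 < p < 1. If P(X ≠ X̂) ≤ D for some D with 0 < D ≤ 1/2, then the mutual information satisfies I[X : X̂] ≥ H(p) − H(D), where H is the binary entropy function. (This is the converse part of the rate-distortion theorem R(D) = H(p) − H(D) for the Bernoulli(p) source with Hamming distortion.) -/
open MeasureTheory

/-- Shannon entropy (natural logarithm) of a random variable with values in a
finite type, `H[X] = ∑ s, -P(X = s) log P(X = s)`. -/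
noncomputable def entropy {Ω S : Type*} [MeasurableSpace Ω] [Fintype S]
    (μ : Measure Ω) (X : Ω → S) : ℝ :=
  ∑ s : S, Real.negMulLog (μ (X ⁻¹' {s})).toReal

/-- Conditional entropy (natural logarithm)
`H[X|Y] = ∑ P(X = s, Y = t) log (P(Y = t) / P(X = s, Y = t))`. -/
noncomputable def condEntropy {Ω S T : Type*} [MeasurableSpace Ω] [Fintype S] [Fintype T]
    (μ : Measure Ω) (X : Ω → S) (Y : Ω → T) : ℝ :=
  ∑ t : T, ∑ s : S,
    (μ (X ⁻¹' {s} ∩ Y ⁻¹' {t})).toReal *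
      Real.log ((μ (Y ⁻¹' {t})).toReal / (μ (X ⁻¹' {s} ∩ Y ⁻¹' {t})).toReal)

/-- Mutual information (natural logarithm) `I[X : Y] = H[X] - H[X|Y]`. -/
noncomputable def mutualInfo {Ω S T : Type*} [MeasurableSpace Ω] [Fintype S] [Fintype T]
    (μ : Measure Ω) (X : Ω → S) (Y : Ω → T) : ℝ :=
  entropy μ X - condEntropy μ X Y

lemma term_bound (m e w : ℝ) (hm : 0 ≤ m) (he : m ≤ e) (hw : 0 < w) :
    m * Real.log (e / m) ≤ (e * w - m) + m * (-Real.log w) := by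
  rcases hm.eq_or_lt with h | h
  · rw [← h]
    have : 0 ≤ e * w := mul_nonneg (le_trans hm he) hw.le
    simpa using this
  · have hepos : 0 < e := lt_of_lt_of_le h he
    have h1 : Real.log (e * w / m) = Real.log (e / m) + Real.log w := by
      rw [show e * w / m = (e / m) * w by ring,
        Real.log_mul (by positivity) hw.ne']
    have h2 : Real.log (e * w / m) ≤ e * w / m - 1 :=
      Real.log_le_sub_one_of_pos (by positivity)
    have h3 : m * Real.log (e * w / m) ≤ e * w - m := by
      calc m * Real.log (e * w / m) ≤ m * (e * w / m - 1) := by nlinarith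
        _ = e * w - m := by field_simp
    have h4 : m * Real.log (e / m) = m * Real.log (e * w / m) - m * Real.log w := by
      rw [h1]; ring
    linarith

lemma key_ineq (a b c d D : ℝ) (ha : 0 ≤ a) (hb : 0 ≤ b) (hc : 0 ≤ c) (hd : 0 ≤ d)
    (hD0 : 0 < D) (hD2 : D ≤ 1 / 2) (hsum : a + b + c + d = 1) (hq : b + c ≤ D) :
    a * Real.log ((a + c) / a) + c * Real.log ((a + c) / c)
      + b * Real.log ((b + d) / b) + d * Real.log ((b + d) / d) ≤ Real.binEntropy D := by
  have hD1 : D < 1 := by linarith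
  have h1 := term_bound a (a + c) (1 - D) ha (by linarith) (by linarith)
  have h2 := term_bound c (a + c) D hc (by linarith) hD0
  have h3 := term_bound b (b + d) D hb (by linarith) hD0
  have h4 := term_bound d (b + d) (1 - D) hd (by linarith) (by linarith)
  have hlog : Real.log D ≤ Real.log (1 - D) := Real.log_le_log hD0 (by linarith)
  have hBE : Real.binEntropy D = D * (-Real.log D) + (1 - D) * (-Real.log (1 - D)) := by
    rw [Real.binEntropy, Real.log_inv, Real.log_inv]
  set L0 := Real.log (1 - D) with hL0
  set L1 := Real.log D with hL1
  have e1 : a + d = 1 - (b + c) := by linarith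
  have h5 : a * (-L0) + d * (-L0) + b * (-L1) + c * (-L1)
      = (1 - (b + c)) * (-L0) + (b + c) * (-L1) := by rw [← e1]; ring
  have h6 : (1 - (b + c)) * (-L0) + (b + c) * (-L1) ≤ (1 - D) * (-L0) + D * (-L1) := by
    nlinarith [mul_nonneg (sub_nonneg.2 hq) (sub_nonneg.2 hlog)]
  nlinarith [h1, h2, h3, h4, h5, h6]

lemma split_meas {Ω : Type*} [MeasurableSpace Ω] (μ : Measure Ω) [IsProbabilityMeasure μ]
    (s : Set Ω) (Y : Ω → Bool) (hY : Measurable Y) :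
    (μ s).toReal = (μ (s ∩ Y ⁻¹' {true})).toReal + (μ (s ∩ Y ⁻¹' {false})).toReal := by
  rw [← ENNReal.toReal_add (measure_ne_top _ _) (measure_ne_top _ _)]
  congr 1
  have hdiff : s \ Y ⁻¹' {true} = s ∩ Y ⁻¹' {false} := by
    ext ω; simp [Bool.not_eq_true]
  rw [← hdiff, measure_inter_add_diff s (hY (measurableSet_singleton true))]

/-- Converse part of the rate-distortion theorem for the Bernoulli(p) source with
Hamming distortion: if `P(X ≠ X̂) ≤ D` with `0 < D ≤ 1/2`, then
`I[X : X̂] ≥ H(p) - H(D)`. -/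
theorem rate_distortion_converse {Ω : Type*} [MeasurableSpace Ω]
    (μ : Measure Ω) [IsProbabilityMeasure μ]
    (X Xhat : Ω → Bool) (hX : Measurable X) (hXhat : Measurable Xhat)
    (p D : ℝ) (hp0 : 0 < p) (hp1 : p < 1)
    (hXp : (μ {ω | X ω = true}).toReal = p)
    (hD0 : 0 < D) (hD2 : D ≤ 1 / 2)
    (hdist : (μ {ω | X ω ≠ Xhat ω}).toReal ≤ D) :
    Real.binEntropy p - Real.binEntropy D ≤ mutualInfo μ X Xhat := by
  set a := (μ (X ⁻¹' {true} ∩ Xhat ⁻¹' {true})).toReal with ha_def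
  set b := (μ (X ⁻¹' {true} ∩ Xhat ⁻¹' {false})).toReal with hb_def
  set c := (μ (X ⁻¹' {false} ∩ Xhat ⁻¹' {true})).toReal with hc_def
  set d := (μ (X ⁻¹' {false} ∩ Xhat ⁻¹' {false})).toReal with hd_def
  have ha0 : 0 ≤ a := ENNReal.toReal_nonneg
  have hb0 : 0 ≤ b := ENNReal.toReal_nonneg
  have hc0 : 0 ≤ c := ENNReal.toReal_nonneg
  have hd0 : 0 ≤ d := ENNReal.toReal_nonneg
  have hp' : (μ (X ⁻¹' {true})).toReal = p := hXp
  have hPt : (μ (X ⁻¹' {true})).toReal = a + b := split_meas μ _ Xhat hXhat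
  have hPf : (μ (X ⁻¹' {false})).toReal = c + d := split_meas μ _ Xhat hXhat
  have hRt : (μ (Xhat ⁻¹' {true})).toReal = a + c := by
    rw [split_meas μ (Xhat ⁻¹' {true}) X hX, Set.inter_comm, Set.inter_comm (Xhat ⁻¹' {true})]
  have hRf : (μ (Xhat ⁻¹' {false})).toReal = b + d := by
    rw [split_meas μ (Xhat ⁻¹' {false}) X hX, Set.inter_comm, Set.inter_comm (Xhat ⁻¹' {false})]
  have hcompl : X ⁻¹' {false} = (X ⁻¹' {true})ᶜ := by
    ext ω; simp [Bool.not_eq_true]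
  have h1p : (μ (X ⁻¹' {false})).toReal = 1 - p := by
    have hadd : (μ (X ⁻¹' {true})).toReal + (μ ((X ⁻¹' {true})ᶜ)).toReal = 1 := by
      rw [← ENNReal.toReal_add (measure_ne_top _ _) (measure_ne_top _ _),
        measure_add_measure_compl (hX (measurableSet_singleton true))]
      simp
    rw [hcompl]; linarith
  have hsum : a + b + c + d = 1 := by
    have := hPt; have := hPf; linarith [hp' ▸ hPt, h1p ▸ hPf]
  have hq : (μ {ω | X ω ≠ Xhat ω}).toReal = b + c := by
    have hset : {ω | X ω ≠ Xhat ω}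
        = (X ⁻¹' {true} ∩ Xhat ⁻¹' {false}) ∪ (X ⁻¹' {false} ∩ Xhat ⁻¹' {true}) := by
      ext ω
      cases hx : X ω <;> cases hy : Xhat ω <;> simp [hx, hy]
    have hdisj : Disjoint (X ⁻¹' {true} ∩ Xhat ⁻¹' {false})
        (X ⁻¹' {false} ∩ Xhat ⁻¹' {true}) := by
      rw [Set.disjoint_left]
      rintro ω ⟨h1, _⟩ ⟨h2, _⟩
      simp [Set.mem_preimage] at h1 h2
      rw [h1] at h2; exact Bool.noConfusion h2
    rw [hset, measure_union hdisj
      ((hX (measurableSet_singleton false)).inter (hXhat (measurableSet_singleton true))),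
      ENNReal.toReal_add (measure_ne_top _ _) (measure_ne_top _ _)]
  have hqD : b + c ≤ D := hq ▸ hdist
  have hent : entropy μ X = Real.binEntropy p := by
    rw [entropy, Fintype.sum_bool, hp', h1p,
      Real.binEntropy_eq_negMulLog_add_negMulLog_one_sub]
  have hcond : condEntropy μ X Xhat ≤ Real.binEntropy D := by
    have hexp : condEntropy μ X Xhat
        = a * Real.log ((a + c) / a) + c * Real.log ((a + c) / c)
          + b * Real.log ((b + d) / b) + d * Real.log ((b + d) / d) := by
      rw [condEntropy, Fintype.sum_bool, Fintype.sum_bool, Fintype.sum_bool, hRt, hRf,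
        ← ha_def, ← hb_def, ← hc_def, ← hd_def]
      ring
    rw [hexp]
    exact key_ineq a b c d D ha0 hb0 hc0 hd0 hD0 hD2 hsum hqD
  rw [mutualInfo, hent]
  linarith
end

section
/- Let X and X̂ be Bool-valued random variables on a probability space. If P(X ≠ X̂) ≤ D for some D with 0 < D ≤ 1/2, then the conditional entropy satisfies H[X | X̂] ≤ H(D), where H is the binary entropy function. (Proved via the error variable Z = X xor X̂: H[X|X̂] = H[Z|X̂] ≤ H[Z] ≤ H(D), the last step because among binary random variables with mean at most D ≤ 1/2, Bernoulli(D) has maximum entropy.) -/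
open MeasureTheory

private lemma half_aux (x s r : ℝ) (hx : 0 ≤ x) (hxs : x ≤ s) (hr : 0 < r) :
    x * Real.log (s / x) + x * Real.log r ≤ s * r - x := by
  rcases eq_or_lt_of_le hx with h | hxpos
  · rcases eq_or_lt_of_le (h ▸ hxs : (0:ℝ) ≤ s) with hs | hs
    · simp [← h, ← hs]
    · simp only [← h, zero_mul, add_zero, zero_add, sub_zero]
      positivity
  · have hs : 0 < s := lt_of_lt_of_le hxpos hxs
    have h1 : Real.log (s / x) + Real.log r = Real.log (s * r / x) := by
      rw [← Real.log_mul (by positivity) (ne_of_gt hr)]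
      ring_nf
    have h2 : Real.log (s * r / x) ≤ s * r / x - 1 :=
      Real.log_le_sub_one_of_pos (by positivity)
    calc x * Real.log (s / x) + x * Real.log r = x * Real.log (s * r / x) := by
          rw [← h1]; ring
      _ ≤ x * (s * r / x - 1) := by
          exact mul_le_mul_of_nonneg_left h2 hx
      _ = s * r - x := by field_simp

private lemma key_aux (x y q : ℝ) (hx : 0 ≤ x) (hy : 0 ≤ y) (hq0 : 0 < q) (hq1 : q < 1) :
    x * Real.log ((x + y) / x) + y * Real.log ((x + y) / y) ≤
      -(x * Real.log (1 - q)) - y * Real.log q := by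
  have h1 := half_aux x (x + y) (1 - q) hx (by linarith) (by linarith)
  have h2 := half_aux y (x + y) q hy (by linarith) hq0
  nlinarith [h1, h2]

/-- Fano-type bound: if `P(X ≠ X̂) ≤ D` with `0 < D ≤ 1/2`, then the conditional
entropy satisfies `H[X | X̂] ≤ H(D)` where `H` is binary entropy. -/
theorem condEntropy_le_binEntropy {Ω : Type*} [MeasurableSpace Ω]
    (μ : Measure Ω) [IsProbabilityMeasure μ]
    (X Xhat : Ω → Bool) (hX : Measurable X) (hXhat : Measurable Xhat)
    (D : ℝ) (hD0 : 0 < D) (hD2 : D ≤ 1 / 2)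
    (hdist : (μ {ω | X ω ≠ Xhat ω}).toReal ≤ D) :
    condEntropy μ X Xhat ≤ Real.binEntropy D := by
  set a := (μ (X ⁻¹' {false} ∩ Xhat ⁻¹' {false})).toReal with ha
  set b := (μ (X ⁻¹' {true} ∩ Xhat ⁻¹' {false})).toReal with hb
  set c := (μ (X ⁻¹' {false} ∩ Xhat ⁻¹' {true})).toReal with hc
  set d := (μ (X ⁻¹' {true} ∩ Xhat ⁻¹' {true})).toReal with hd
  have ha0 : 0 ≤ a := ENNReal.toReal_nonneg
  have hb0 : 0 ≤ b := ENNReal.toReal_nonneg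
  have hc0 : 0 ≤ c := ENNReal.toReal_nonneg
  have hd0' : 0 ≤ d := ENNReal.toReal_nonneg
  -- measurability facts
  have mff : MeasurableSet (X ⁻¹' {false}) := hX (measurableSet_singleton _)
  have mft : MeasurableSet (X ⁻¹' {true}) := hX (measurableSet_singleton _)
  have mhf : MeasurableSet (Xhat ⁻¹' {false}) := hXhat (measurableSet_singleton _)
  have mht : MeasurableSet (Xhat ⁻¹' {true}) := hXhat (measurableSet_singleton _)
  -- disjointness helper
  have disjX : ∀ t : Set Bool, Disjoint (X ⁻¹' {false} ∩ Xhat ⁻¹' t) (X ⁻¹' {true} ∩ Xhat ⁻¹' t) := by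
    intro t
    apply Set.disjoint_left.2
    intro ω hω1 hω2
    simp only [Set.mem_inter_iff, Set.mem_preimage, Set.mem_singleton_iff] at hω1 hω2
    rw [hω1.1] at hω2
    exact Bool.false_ne_true hω2.1
  -- marginals
  have hmargf : (μ (Xhat ⁻¹' {false})).toReal = a + b := by
    have hset : Xhat ⁻¹' {false} =
        (X ⁻¹' {false} ∩ Xhat ⁻¹' {false}) ∪ (X ⁻¹' {true} ∩ Xhat ⁻¹' {false}) := by
      ext ω
      simp only [Set.mem_union, Set.mem_inter_iff, Set.mem_preimage, Set.mem_singleton_iff]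
      cases hXe : X ω <;> simp
    rw [hset, measure_union (disjX _) (mft.inter mhf),
      ENNReal.toReal_add (measure_ne_top _ _) (measure_ne_top _ _)]
  have hmargt : (μ (Xhat ⁻¹' {true})).toReal = c + d := by
    have hset : Xhat ⁻¹' {true} =
        (X ⁻¹' {false} ∩ Xhat ⁻¹' {true}) ∪ (X ⁻¹' {true} ∩ Xhat ⁻¹' {true}) := by
      ext ω
      simp only [Set.mem_union, Set.mem_inter_iff, Set.mem_preimage, Set.mem_singleton_iff]
      cases hXe : X ω <;> simp
    rw [hset, measure_union (disjX _) (mft.inter mht),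
      ENNReal.toReal_add (measure_ne_top _ _) (measure_ne_top _ _)]
  -- error probability
  have herr : (μ {ω | X ω ≠ Xhat ω}).toReal = b + c := by
    have hset : {ω | X ω ≠ Xhat ω} =
        (X ⁻¹' {true} ∩ Xhat ⁻¹' {false}) ∪ (X ⁻¹' {false} ∩ Xhat ⁻¹' {true}) := by
      ext ω
      simp only [Set.mem_union, Set.mem_inter_iff, Set.mem_preimage, Set.mem_singleton_iff,
        Set.mem_setOf_eq]
      cases hXe : X ω <;> cases hXh : Xhat ω <;> simp
    have hdisj : Disjoint (X ⁻¹' {true} ∩ Xhat ⁻¹' {false})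
        (X ⁻¹' {false} ∩ Xhat ⁻¹' {true}) := by
      apply Set.disjoint_left.2
      intro ω hω1 hω2
      simp only [Set.mem_inter_iff, Set.mem_preimage, Set.mem_singleton_iff] at hω1 hω2
      rw [hω1.1] at hω2
      exact Bool.false_ne_true hω2.1.symm
    rw [hset, measure_union hdisj (mff.inter mht),
      ENNReal.toReal_add (measure_ne_top _ _) (measure_ne_top _ _)]
  have he : b + c ≤ D := by rw [← herr]; exact hdist
  -- total probability
  have htot : a + b + (c + d) = 1 := by
    have hdisj : Disjoint (Xhat ⁻¹' {false}) (Xhat ⁻¹' {true}) := by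
      apply Set.disjoint_left.2
      intro ω hω1 hω2
      simp only [Set.mem_preimage, Set.mem_singleton_iff] at hω1 hω2
      rw [hω1] at hω2
      exact Bool.false_ne_true hω2
    have huniv : Xhat ⁻¹' {false} ∪ Xhat ⁻¹' {true} = Set.univ := by
      ext ω; cases h : Xhat ω <;> simp [h]
    have := measure_union (μ := μ) hdisj mht
    rw [huniv, measure_univ] at this
    rw [← hmargf, ← hmargt, ← ENNReal.toReal_add (measure_ne_top _ _) (measure_ne_top _ _),
      ← this]
    simp
  -- expand condEntropy
  have hexp : condEntropy μ X Xhat =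
      (a * Real.log ((a + b) / a) + b * Real.log ((a + b) / b)) +
      (d * Real.log ((c + d) / d) + c * Real.log ((c + d) / c)) := by
    rw [condEntropy]
    rw [Fintype.sum_bool, Fintype.sum_bool, Fintype.sum_bool]
    rw [hmargf, hmargt, ← ha, ← hb, ← hc, ← hd]
    ring
  have hD1 : D < 1 := by linarith
  have h1 : a * Real.log ((a + b) / a) + b * Real.log ((a + b) / b) ≤
      -(a * Real.log (1 - D)) - b * Real.log D := key_aux a b D ha0 hb0 hD0 hD1
  have h2 : d * Real.log ((c + d) / d) + c * Real.log ((c + d) / c) ≤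
      -(d * Real.log (1 - D)) - c * Real.log D := by
    have := key_aux d c D hd0' hc0 hD0 hD1
    rw [add_comm d c] at this
    exact this
  have hfinal : -((a + d) * Real.log (1 - D)) - (b + c) * Real.log D ≤ Real.binEntropy D := by
    rw [Real.binEntropy, Real.log_inv, Real.log_inv]
    have hlog : Real.log D ≤ Real.log (1 - D) :=
      Real.log_le_log hD0 (by linarith)
    have had : a + d = 1 - (b + c) := by linarith
    rw [had]
    nlinarith [mul_nonneg (sub_nonneg.2 he) (sub_nonneg.2 hlog)]
  calc condEntropy μ X Xhat ≤ -((a + d) * Real.log (1 - D)) - (b + c) * Real.log D := by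
        rw [hexp]; nlinarith [h1, h2]
    _ ≤ Real.binEntropy D := hfinal
end

section
/- For every p and D with 0 < p < 1 and 0 < D < min(p, 1−p), there exist a probability space and Bool-valued random variables X, X̂ such that P(X = true) = p, P(X ≠ X̂) = D, and I[X : X̂] = H(p) − H(D), where H is the binary entropy function. (This is the achievability part of the rate-distortion theorem for the Bernoulli(p) source with Hamming distortion: the optimal test channel makes the error X xor X̂ a Bernoulli(D) variable independent of X̂.) -/
open MeasureTheory

lemma two_mass (x y : ℝ) (hx : 0 ≤ x) (hy : 0 ≤ y) :
    (ENNReal.ofReal x + ENNReal.ofReal y).toReal = x + y := by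
  rw [← ENNReal.ofReal_add hx hy, ENNReal.toReal_ofReal (by linarith)]

/-- Achievability part of the rate-distortion theorem for the Bernoulli(p) source
with Hamming distortion: for `0 < D < min(p, 1-p)` there exist random variables
`X, X̂` with `P(X = true) = p`, `P(X ≠ X̂) = D` and `I[X : X̂] = H(p) - H(D)`. -/
theorem rate_distortion_achievability (p D : ℝ) (hp0 : 0 < p) (hp1 : p < 1)
    (hD0 : 0 < D) (hD : D < min p (1 - p)) :
    ∃ (Ω : Type) (_ : MeasurableSpace Ω) (μ : Measure Ω) (_ : IsProbabilityMeasure μ)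
      (X Xhat : Ω → Bool), Measurable X ∧ Measurable Xhat ∧
      (μ {ω | X ω = true}).toReal = p ∧
      (μ {ω | X ω ≠ Xhat ω}).toReal = D ∧
      mutualInfo μ X Xhat = Real.binEntropy p - Real.binEntropy D := by
  classical
  have hDp : D < p := lt_of_lt_of_le hD (min_le_left _ _)
  have hD1p : D < 1 - p := lt_of_lt_of_le hD (min_le_right _ _)
  have h2D : 0 < 1 - 2*D := by linarith
  have hD1 : D < 1 := by linarith
  set q : ℝ := (p - D) / (1 - 2*D) with hqdef
  have hq2 : q * (1 - 2*D) = p - D := div_mul_cancel₀ _ (ne_of_gt h2D)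
  have hq0 : 0 < q := div_pos (by linarith) h2D
  have hq1 : q < 1 := (div_lt_one h2D).mpr (by linarith)
  have ha : 0 < q*(1-D) := by nlinarith
  have hb : 0 < q*D := by nlinarith
  have hc : 0 < (1-q)*D := by nlinarith
  have hd : 0 < (1-q)*(1-D) := by nlinarith
  set μ : Measure (Bool × Bool) :=
    ENNReal.ofReal (q*(1-D)) • Measure.dirac (true,true)
    + ENNReal.ofReal (q*D) • Measure.dirac (false,true)
    + ENNReal.ofReal ((1-q)*D) • Measure.dirac (true,false)
    + ENNReal.ofReal ((1-q)*(1-D)) • Measure.dirac (false,false) with hμdef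
  have hμapp : ∀ S : Set (Bool × Bool), μ S =
      ENNReal.ofReal (q*(1-D)) * S.indicator 1 (true,true)
      + ENNReal.ofReal (q*D) * S.indicator 1 (false,true)
      + ENNReal.ofReal ((1-q)*D) * S.indicator 1 (true,false)
      + ENNReal.ofReal ((1-q)*(1-D)) * S.indicator 1 (false,false) := by
    intro S
    simp [hμdef, Measure.dirac_apply]
  have hprob : IsProbabilityMeasure μ := by
    constructor
    rw [hμapp]
    simp only [Set.indicator_apply, Set.mem_univ, if_true, Pi.one_apply, mul_one]
    rw [← ENNReal.ofReal_add ha.le hb.le, ← ENNReal.ofReal_add (by linarith) hc.le,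
      ← ENNReal.ofReal_add (by linarith) hd.le]
    rw [show q*(1-D) + q*D + (1-q)*D + (1-q)*(1-D) = 1 by ring]
    exact ENNReal.ofReal_one
  -- measure computations
  have mXt : (μ ((Prod.fst : Bool × Bool → Bool) ⁻¹' {true})).toReal = p := by
    rw [hμapp]
    simp only [Set.indicator_apply, Set.mem_preimage, Set.mem_singleton_iff,
      Pi.one_apply, mul_one, mul_zero]
    norm_num
    rw [two_mass _ _ ha.le hc.le]
    linear_combination hq2
  have mXf : (μ ((Prod.fst : Bool × Bool → Bool) ⁻¹' {false})).toReal = 1 - p := by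
    rw [hμapp]
    simp only [Set.indicator_apply, Set.mem_preimage, Set.mem_singleton_iff,
      Pi.one_apply, mul_one, mul_zero]
    norm_num
    rw [two_mass _ _ hb.le hd.le]
    linear_combination -hq2
  have mYt : (μ ((Prod.snd : Bool × Bool → Bool) ⁻¹' {true})).toReal = q := by
    rw [hμapp]
    simp only [Set.indicator_apply, Set.mem_preimage, Set.mem_singleton_iff,
      Pi.one_apply, mul_one, mul_zero]
    norm_num
    rw [two_mass _ _ ha.le hb.le]
    ring
  have mYf : (μ ((Prod.snd : Bool × Bool → Bool) ⁻¹' {false})).toReal = 1 - q := by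
    rw [hμapp]
    simp only [Set.indicator_apply, Set.mem_preimage, Set.mem_singleton_iff,
      Pi.one_apply, mul_one, mul_zero]
    norm_num
    rw [two_mass _ _ hc.le hd.le]
    ring
  have mtt : (μ ((Prod.fst : Bool × Bool → Bool) ⁻¹' {true} ∩ Prod.snd ⁻¹' {true})).toReal
      = q*(1-D) := by
    rw [hμapp]
    simp only [Set.indicator_apply, Set.mem_inter_iff, Set.mem_preimage,
      Set.mem_singleton_iff, Pi.one_apply, mul_one, mul_zero]
    norm_num
    exact ha.le
  have mft : (μ ((Prod.fst : Bool × Bool → Bool) ⁻¹' {false} ∩ Prod.snd ⁻¹' {true})).toReal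
      = q*D := by
    rw [hμapp]
    simp only [Set.indicator_apply, Set.mem_inter_iff, Set.mem_preimage,
      Set.mem_singleton_iff, Pi.one_apply, mul_one, mul_zero]
    norm_num
    exact hb.le
  have mtf : (μ ((Prod.fst : Bool × Bool → Bool) ⁻¹' {true} ∩ Prod.snd ⁻¹' {false})).toReal
      = (1-q)*D := by
    rw [hμapp]
    simp only [Set.indicator_apply, Set.mem_inter_iff, Set.mem_preimage,
      Set.mem_singleton_iff, Pi.one_apply, mul_one, mul_zero]
    norm_num
    exact hc.le
  have mff : (μ ((Prod.fst : Bool × Bool → Bool) ⁻¹' {false} ∩ Prod.snd ⁻¹' {false})).toReal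
      = (1-q)*(1-D) := by
    rw [hμapp]
    simp only [Set.indicator_apply, Set.mem_inter_iff, Set.mem_preimage,
      Set.mem_singleton_iff, Pi.one_apply, mul_one, mul_zero]
    norm_num
    exact hd.le
  refine ⟨Bool × Bool, inferInstance, μ, hprob, Prod.fst, Prod.snd,
    measurable_fst, measurable_snd, ?_, ?_, ?_⟩
  · have : {ω : Bool × Bool | ω.1 = true} = (Prod.fst : Bool × Bool → Bool) ⁻¹' {true} := by
      ext ⟨x, y⟩; simp
    rw [this, mXt]
  · have : {ω : Bool × Bool | ω.1 ≠ ω.2} =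
        ({(true, false), (false, true)} : Set (Bool × Bool)) := by
      ext ⟨x, y⟩
      cases x <;> cases y <;> simp
    rw [this, hμapp]
    simp only [Set.indicator_apply, Set.mem_insert_iff, Set.mem_singleton_iff,
      Pi.one_apply, mul_one, mul_zero]
    norm_num
    rw [two_mass _ _ hb.le hc.le]
    ring
  · unfold mutualInfo entropy condEntropy
    rw [Fintype.sum_bool, Fintype.sum_bool, Fintype.sum_bool, Fintype.sum_bool]
    rw [mXt, mXf, mYt, mYf, mtt, mft, mtf, mff]
    have e1 : Real.log (q / (q*(1-D))) = -Real.log (1-D) := by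
      rw [div_mul_cancel_left₀ (ne_of_gt hq0), Real.log_inv]
    have e2 : Real.log (q / (q*D)) = -Real.log D := by
      rw [div_mul_cancel_left₀ (ne_of_gt hq0), Real.log_inv]
    have e3 : Real.log ((1-q) / ((1-q)*D)) = -Real.log D := by
      rw [div_mul_cancel_left₀ (by linarith : (1:ℝ)-q ≠ 0), Real.log_inv]
    have e4 : Real.log ((1-q) / ((1-q)*(1-D))) = -Real.log (1-D) := by
      rw [div_mul_cancel_left₀ (by linarith : (1:ℝ)-q ≠ 0), Real.log_inv]
    rw [e1, e2, e3, e4, Real.binEntropy_eq_negMulLog_add_negMulLog_one_sub,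
      Real.binEntropy_eq_negMulLog_add_negMulLog_one_sub]
    unfold Real.negMulLog
    ring
end

section
/- Fix p, D with 0 < p < 1 and 0 < D < 1/2. Then the expected d-tilted information equals the rate-distortion function: (1−p)·j0 + p·j1 = H(p) − H(D), where H is the binary entropy function. (This is the identity E[ȷ_X(X, D)] = R(D) for the Bernoulli(p) source with Hamming distortion.) -/
/-- The expected d-tilted information equals the rate-distortion function for
the Bernoulli(p) source with Hamming distortion:
`(1-p)·j0 + p·j1 = H(p) - H(D)`, where
`j0 = -D·log((1-D)/D) + log((1-D)/(1-p))` and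
`j1 = -D·log((1-D)/D) + log((1-D)/p)`. -/
theorem expected_dtilted_information (p D : ℝ)
    (hp0 : 0 < p) (hp1 : p < 1) (hD0 : 0 < D) (hD2 : D < 1 / 2) :
    (1 - p) * (-D * Real.log ((1 - D) / D) + Real.log ((1 - D) / (1 - p)))
      + p * (-D * Real.log ((1 - D) / D) + Real.log ((1 - D) / p))
      = Real.binEntropy p - Real.binEntropy D := by
  have hp1' : 1 - p ≠ 0 := by linarith
  have hD1 : 1 - D ≠ 0 := by linarith
  rw [Real.binEntropy, Real.binEntropy,
    Real.log_div hD1 (ne_of_gt hD0), Real.log_div hD1 hp1',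
    Real.log_div hD1 (ne_of_gt hp0)]
  simp only [Real.log_inv]; ring
end

section
/- For every encoder f : (Fin 3 → Bool) → Fin 4 and every decoder g : Fin 4 → (Fin 3 → Bool), the average per-symbol Hamming distortion under the Bernoulli(3/10) source satisfies ∑_{x : Fin 3 → Bool} P(x) · hammingDist(x, g(f(x)))/3 ≥ 81/1000, where P(x) = (3/10)^w(x) · (7/10)^(3−w(x)) and w(x) is the number of coordinates of x equal to true. (The weight-≤1 codebook with nearest-neighbor encoding is optimal among all codes with M = 4 codewords at block length n = 3.) -/
set_option maxRecDepth 100000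
set_option maxHeartbeats 1000000

/-- The Hamming weight of a length-3 binary string. -/
def hammingWeight3 (x : Fin 3 → Bool) : ℕ :=
  (Finset.univ.filter fun i => x i = true).card

def d8 (a b : Fin 8) : ℕ :=
  ((a.val ^^^ b.val) % 2) + ((a.val ^^^ b.val) / 2 % 2) + ((a.val ^^^ b.val) / 4 % 2)

def w8 (a : Fin 8) : ℕ := (a.val % 2) + (a.val / 2 % 2) + (a.val / 4 % 2)

lemma key8 : ∀ a b c d : Fin 8,
    243 ≤ ∑ x : Fin 8, 3 ^ w8 x * 7 ^ (3 - w8 x) *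
      min (min (d8 x a) (d8 x b)) (min (d8 x c) (d8 x d)) := by
  decide

def enc3 (x : Fin 3 → Bool) : Fin 8 :=
  ⟨(cond (x 0) 1 0) + 2 * (cond (x 1) 1 0) + 4 * (cond (x 2) 1 0), by
    cases x 0 <;> cases x 1 <;> cases x 2 <;> simp⟩

lemma enc3_bij : Function.Bijective enc3 := by decide

lemma d8_enc (x y : Fin 3 → Bool) : d8 (enc3 x) (enc3 y) = hammingDist x y := by
  revert x y; decide

lemma w8_enc (x : Fin 3 → Bool) : w8 (enc3 x) = hammingWeight3 x := by
  revert x; decide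

lemma hw_le (x : Fin 3 → Bool) : hammingWeight3 x ≤ 3 := by revert x; decide

lemma key_nat (g : Fin 4 → (Fin 3 → Bool)) :
    243 ≤ ∑ x : Fin 3 → Bool, 3 ^ hammingWeight3 x * 7 ^ (3 - hammingWeight3 x) *
      min (min (hammingDist x (g 0)) (hammingDist x (g 1)))
          (min (hammingDist x (g 2)) (hammingDist x (g 3))) := by
  have := key8 (enc3 (g 0)) (enc3 (g 1)) (enc3 (g 2)) (enc3 (g 3))
  rwa [← Fintype.sum_bijective enc3 enc3_bij _ _ (fun x => by
    rw [w8_enc, d8_enc, d8_enc, d8_enc, d8_enc])] at this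

/-- Converse for block length 3 with 4 codewords: every encoder/decoder pair
has average per-symbol Hamming distortion at least `81/1000` under the
Bernoulli(3/10) product source. -/
theorem blocklength_three_code_converse
    (f : (Fin 3 → Bool) → Fin 4) (g : Fin 4 → (Fin 3 → Bool)) :
    (81 / 1000 : ℝ) ≤
      ∑ x : Fin 3 → Bool,
        ((3 / 10 : ℝ) ^ hammingWeight3 x * (7 / 10 : ℝ) ^ (3 - hammingWeight3 x))
          * (hammingDist x (g (f x)) : ℝ) / 3 := by
  set m : (Fin 3 → Bool) → ℕ := fun x =>
    min (min (hammingDist x (g 0)) (hammingDist x (g 1)))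
        (min (hammingDist x (g 2)) (hammingDist x (g 3))) with hm
  have hmle : ∀ x, m x ≤ hammingDist x (g (f x)) := by
    intro x
    have h4 : ∀ j : Fin 4, m x ≤ hammingDist x (g j) := by
      intro j; fin_cases j <;> simp [hm]
    exact h4 (f x)
  have hP : ∀ x : Fin 3 → Bool,
      ((3 / 10 : ℝ) ^ hammingWeight3 x * (7 / 10 : ℝ) ^ (3 - hammingWeight3 x))
        = (3 ^ hammingWeight3 x * 7 ^ (3 - hammingWeight3 x) : ℕ) / 1000 := by
    intro x
    have h3 : hammingWeight3 x + (3 - hammingWeight3 x) = 3 := by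
      have := hw_le x; omega
    push_cast
    rw [div_pow, div_pow, div_mul_div_comm, ← pow_add, h3]
    norm_num
  have step1 : ∑ x : Fin 3 → Bool,
      ((3 / 10 : ℝ) ^ hammingWeight3 x * (7 / 10 : ℝ) ^ (3 - hammingWeight3 x))
        * (m x : ℝ) / 3 ≤
      ∑ x : Fin 3 → Bool,
        ((3 / 10 : ℝ) ^ hammingWeight3 x * (7 / 10 : ℝ) ^ (3 - hammingWeight3 x))
          * (hammingDist x (g (f x)) : ℝ) / 3 := by
    apply Finset.sum_le_sum
    intro x _
    have hpos : (0:ℝ) ≤ (3 / 10 : ℝ) ^ hammingWeight3 x * (7 / 10 : ℝ) ^ (3 - hammingWeight3 x) := by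
      positivity
    have : (m x : ℝ) ≤ (hammingDist x (g (f x)) : ℝ) := by exact_mod_cast hmle x
    apply div_le_div_of_nonneg_right (mul_le_mul_of_nonneg_left this hpos) (by norm_num) |>.trans_eq rfl
  refine le_trans ?_ step1
  have hsum : ∑ x : Fin 3 → Bool,
      ((3 / 10 : ℝ) ^ hammingWeight3 x * (7 / 10 : ℝ) ^ (3 - hammingWeight3 x))
        * (m x : ℝ) / 3
      = ((∑ x : Fin 3 → Bool, 3 ^ hammingWeight3 x * 7 ^ (3 - hammingWeight3 x) * m x : ℕ) : ℝ) / 3000 := by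
    push_cast
    rw [Finset.sum_div]
    refine Finset.sum_congr rfl fun x _ => ?_
    rw [hP x]
    push_cast
    ring
  rw [hsum]
  have h243 : (243 : ℝ) ≤ ((∑ x : Fin 3 → Bool, 3 ^ hammingWeight3 x * 7 ^ (3 - hammingWeight3 x) * m x : ℕ) : ℝ) := by
    exact_mod_cast key_nat g
  linarith
end
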